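/- For n ≥ 17, Σ_{k=1}^{n} (2^k − 1)/k ≤ 2^{n+1} / (n − 1 − 2/(n−5) + 1/n²). -/

import Mathlib

/-!
Induction on `n` from the base case `n = 17`. Dropping the `-1` in the new term, the step reduces
to the doubling inequality `1 / D x + 1 / (x + 1) ≤ 2 / D (x + 1)` for `D = expSumDenom`, which
after clearing denominators is a polynomial inequality valid for `x ≥ 17` (it fails just below 17).
-/

open Finset

noncomputable def expSumDenom (x : ℝ) : ℝ := x - 1 - 2 / (x - 5) + 1 / x ^ 2

lemma expSumDenom_pos {x : ℝ} (hx : 6 ≤ x) : 0 < expSumDenom x := by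
  have h : 2 / (x - 5) ≤ 2 := by
    rw [div_le_iff₀ (by linarith)]; linarith
  unfold expSumDenom
  have : 0 ≤ 1 / x ^ 2 := by positivity
  linarith

lemma expSumDenom_eq_div {x : ℝ} (hx : x ≠ 0) (hx5 : x - 5 ≠ 0) :
    expSumDenom x = ((x - 1) * (x - 5) * x ^ 2 - 2 * x ^ 2 + (x - 5)) / (x ^ 2 * (x - 5)) := by
  unfold expSumDenom
  field_simp

lemma one_div_expSumDenom_add_one_div_le {x : ℝ} (hx : 17 ≤ x) :
    1 / expSumDenom x + 1 / (x + 1) ≤ 2 / expSumDenom (x + 1) := by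
  have ht : 0 ≤ x - 17 := by linarith
  have hP : 0 < (x - 1) * (x - 5) * x ^ 2 - 2 * x ^ 2 + (x - 5) := by
    nlinarith [pow_nonneg ht 3, pow_nonneg ht 4]
  have hQ : 0 < (x + 1 - 1) * (x + 1 - 5) * (x + 1) ^ 2 - 2 * (x + 1) ^ 2 + (x + 1 - 5) := by
    nlinarith [pow_nonneg ht 3, pow_nonneg ht 4]
  rw [expSumDenom_eq_div (by linarith) (by linarith),
    expSumDenom_eq_div (by linarith) (by linarith), one_div_div, div_div_eq_mul_div,
    div_add_div _ _ hP.ne' (by linarith), div_le_div_iff₀ (by positivity) hQ]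
  nlinarith [pow_nonneg ht 2, pow_nonneg ht 3, pow_nonneg ht 4, pow_nonneg ht 5]

lemma sum_Icc_two_pow_sub_one_div_le {n : ℕ} (hn : 17 ≤ n) :
    ∑ k ∈ Icc 1 n, ((2 : ℝ) ^ k - 1) / k ≤ 2 ^ (n + 1) / expSumDenom n := by
  induction n, hn using Nat.le_induction with
  | base => norm_num [Finset.sum_Icc_succ_top, expSumDenom]
  | succ n hn ih =>
    have hx : (17 : ℝ) ≤ n := by exact_mod_cast hn
    calc ∑ k ∈ Icc 1 (n + 1), ((2 : ℝ) ^ k - 1) / k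
        = ∑ k ∈ Icc 1 n, ((2 : ℝ) ^ k - 1) / k + (2 ^ (n + 1) - 1) / (n + 1) := by
          rw [sum_Icc_succ_top (by omega)]; push_cast; rfl
      _ ≤ 2 ^ (n + 1) / expSumDenom n + 2 ^ (n + 1) / (n + 1) := by
          gcongr; linarith
      _ = 2 ^ (n + 1) * (1 / expSumDenom n + 1 / (n + 1)) := by ring
      _ ≤ 2 ^ (n + 1) * (2 / expSumDenom (n + 1)) := by
          gcongr; exact one_div_expSumDenom_add_one_div_le hx
      _ = 2 ^ (n + 1 + 1) / expSumDenom ↑(n + 1) := by push_cast; ring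

theorem stmt11 (n : ℕ) (hn : 17 ≤ n) :
    ∑ k ∈ Finset.Icc 1 n, ((2 : ℝ) ^ k - 1) / (k : ℝ) ≤
      2 ^ (n + 1) / ((n : ℝ) - 1 - 2 / ((n : ℝ) - 5) + 1 / (n : ℝ) ^ 2) :=
  sum_Icc_two_pow_sub_one_div_le hn
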